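/- Let θ be a compatible L-preorder on an algebra with L-order M. Then the factor structure M/θ, with universe {[a]_θ : a ∈ M} where [a]_θ = {b : θ(a,b) = θ(b,a) = 1}, operations f([a₁],…,[aₙ]) = [f(a₁,…,aₙ)], and relation [a] ≼ [b] = θ(a,b), is a well-defined algebra with L-order (in particular the operations and the relation are independent of the choice of representatives, and the three axioms of algebras with L-order hold). -/

import Mathlib

/-- A complete (integral commutative) residuated lattice. -/
class CRL (L : Type*) extends CompleteLattice L, CommMonoid L where
  himp : L → L → L
  adj : ∀ a b c : L, a * b ≤ c ↔ a ≤ himp b c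
  one_top : (1 : L) = ⊤

/-- A type (signature) of algebras: function symbols with finite arities. -/
structure Signature where
  F : Type
  ar : F → ℕ

/-- An algebra with L-order on carrier `M`: a fuzzy order `ord` and operations
interpreting each function symbol, satisfying reflexivity/antisymmetry,
transitivity, and compatibility. -/
structure LoAlgOn (L : Type*) [CRL L] (S : Signature) (M : Type*) where
  ord : M → M → L
  ops : ∀ f : S.F, (Fin (S.ar f) → M) → M
  refl_antisymm : ∀ a b : M, (ord a b = 1 ∧ ord b a = 1) ↔ a = b
  trans : ∀ a b c : M, ord a b * ord b c ≤ ord a c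
  compat : ∀ (f : S.F) (as bs : Fin (S.ar f) → M),
    (∏ i, ord (as i) (bs i)) ≤ ord (ops f as) (ops f bs)

/-- A compatible L-preorder on an algebra with L-order. -/
def IsCompatPreorder {L : Type*} [CRL L] {S : Signature} {M : Type*}
    (A : LoAlgOn L S M) (θ : M → M → L) : Prop :=
  (∀ a b : M, A.ord a b ≤ θ a b) ∧
  (∀ a b c : M, θ a b * θ b c ≤ θ a c) ∧
  (∀ (f : S.F) (as bs : Fin (S.ar f) → M),
    (∏ i, θ (as i) (bs i)) ≤ θ (A.ops f as) (A.ops f bs))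

/-- A homomorphism of algebras with L-order. -/
def IsHom {L : Type*} [CRL L] {S : Signature} {M N : Type*}
    (A : LoAlgOn L S M) (B : LoAlgOn L S N) (h : M → N) : Prop :=
  (∀ (f : S.F) (as : Fin (S.ar f) → M), h (A.ops f as) = B.ops f (fun i => h (as i))) ∧
  (∀ a b : M, A.ord a b ≤ B.ord (h a) (h b))

/-!
Transitivity of θ shows that the kernel a ~ b :⇔ θ(a,b) = θ(b,a) = 1 is an equivalence and that
θ is constant on pairs of ~-classes, since θ(a,b) ≤ θ(a',b') whenever θ(a',a) = θ(b,b') = 1.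
Compatibility of θ with the operations shows that they preserve ~. The axioms of an algebra with
L-order then pass to the quotient: antisymmetry holds because ~ is exactly the kernel of θ, while
transitivity and compatibility are those of θ read on representatives. Reflexivity of θ comes from
≼ ⊆ θ and reflexivity of ≼.
-/

namespace CRL

variable {L : Type*} [CRL L]

theorem le_one (x : L) : x ≤ 1 := by
  rw [CRL.one_top]
  exact le_top

theorem eq_one_of_one_le {x : L} (h : 1 ≤ x) : x = 1 :=
  le_antisymm (le_one x) h

end CRL

namespace FuzzyPreorder

variable {L : Type*} [CRL L] {M : Type*} {θ : M → M → L}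
  (htrans : ∀ a b c : M, θ a b * θ b c ≤ θ a c)
include htrans

theorem le_of_eq_one_left {a b c : M} (h : θ b a = 1) : θ a c ≤ θ b c := by
  simpa [h] using htrans b a c

theorem le_of_eq_one_right {a b c : M} (h : θ b c = 1) : θ a b ≤ θ a c := by
  simpa [h] using htrans a b c

theorem eq_one_trans {a b c : M} (hab : θ a b = 1) (hbc : θ b c = 1) : θ a c = 1 :=
  CRL.eq_one_of_one_le (by simpa [hab, hbc] using htrans a b c)

def kernel (hrefl : ∀ a : M, θ a a = 1) : Setoid M where
  r a b := θ a b = 1 ∧ θ b a = 1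
  iseqv :=
    { refl := fun a => ⟨hrefl a, hrefl a⟩
      symm := fun h => ⟨h.2, h.1⟩
      trans := fun h₁ h₂ => ⟨eq_one_trans htrans h₁.1 h₂.1, eq_one_trans htrans h₂.2 h₁.2⟩ }

theorem eq_of_kernel (hrefl : ∀ a : M, θ a a = 1) {a b c d : M}
    (hac : (kernel htrans hrefl).r a c) (hbd : (kernel htrans hrefl).r b d) :
    θ a b = θ c d :=
  le_antisymm
    ((le_of_eq_one_left htrans hac.2).trans (le_of_eq_one_right htrans hbd.1))
    ((le_of_eq_one_left htrans hac.1).trans (le_of_eq_one_right htrans hbd.2))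

end FuzzyPreorder

namespace IsCompatPreorder

variable {L : Type*} [CRL L] {S : Signature} {M : Type*} {A : LoAlgOn L S M} {θ : M → M → L}
  (hθ : IsCompatPreorder A θ)
include hθ

theorem refl_eq_one (a : M) : θ a a = 1 :=
  CRL.eq_one_of_one_le (((A.refl_antisymm a a).mpr rfl).1 ▸ hθ.1 a a)

def setoid : Setoid M :=
  FuzzyPreorder.kernel hθ.2.1 hθ.refl_eq_one

theorem ops_eq_one {f : S.F} {as bs : Fin (S.ar f) → M} (h : ∀ i, θ (as i) (bs i) = 1) :
    θ (A.ops f as) (A.ops f bs) = 1 :=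
  CRL.eq_one_of_one_le (by simpa [h] using hθ.2.2 f as bs)

theorem setoid_ops {f : S.F} {as bs : Fin (S.ar f) → M} (h : ∀ i, hθ.setoid.r (as i) (bs i)) :
    hθ.setoid.r (A.ops f as) (A.ops f bs) :=
  ⟨hθ.ops_eq_one fun i => (h i).1, hθ.ops_eq_one fun i => (h i).2⟩

noncomputable def quotient : LoAlgOn L S (Quotient hθ.setoid) where
  ord := Quotient.lift₂ θ fun _ _ _ _ => FuzzyPreorder.eq_of_kernel hθ.2.1 hθ.refl_eq_one
  ops f q := Quotient.mk _ (A.ops f fun i => (q i).out)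
  refl_antisymm x y := by
    induction x, y using Quotient.inductionOn₂
    exact (Quotient.eq (r := hθ.setoid)).symm
  trans x y z := by
    induction x, y, z using Quotient.inductionOn₃
    exact hθ.2.1 _ _ _
  compat f qs rs := by
    conv_lhs =>
      rw [← funext fun i => Quotient.out_eq (qs i), ← funext fun i => Quotient.out_eq (rs i)]
    exact hθ.2.2 f _ _

theorem quotient_ops_mk (f : S.F) (as : Fin (S.ar f) → M) :
    hθ.quotient.ops f (fun i => Quotient.mk _ (as i)) = Quotient.mk _ (A.ops f as) :=
  Quotient.sound (hθ.setoid_ops fun i => Quotient.mk_out (as i))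

end IsCompatPreorder

/-- The factor structure M/θ modulo a compatible L-preorder θ is a well-defined
algebra with L-order: the relation a ~ b iff θ(a,b) = θ(b,a) = 1 is an
equivalence, and the quotient carries an algebra with L-order whose operations
and fuzzy order are computed on representatives. -/
theorem stmt_10 {L : Type*} [CRL L] {S : Signature} {M : Type*}
    (A : LoAlgOn L S M) (θ : M → M → L) (hθ : IsCompatPreorder A θ) :
    ∃ s : Setoid M, (∀ a b : M, s.r a b ↔ (θ a b = 1 ∧ θ b a = 1)) ∧
      ∃ B : LoAlgOn L S (Quotient s),
        (∀ (f : S.F) (as : Fin (S.ar f) → M),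
          B.ops f (fun i => Quotient.mk s (as i)) = Quotient.mk s (A.ops f as)) ∧
        (∀ a b : M, B.ord (Quotient.mk s a) (Quotient.mk s b) = θ a b) :=
  ⟨hθ.setoid, fun _ _ => Iff.rfl, hθ.quotient, hθ.quotient_ops_mk, fun _ _ => rfl⟩
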